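/- Suppose K ⊆ ℝ^N is a compact convex set, ω ∈ S^{N-1}, λ ∈ ℝ is such that π_{λ,ω} ∩ K is the orthogonal projection of K onto π_{λ,ω}, and λ ≤ (H_K(ω) − H_K(−ω))/2. Setting μ = H_K(ω) − (1/4)B_K(ω), we have μ ≥ λ + (1/4)B_K(ω) and the reflection across π_{μ,ω} maps the cap K_{μ,ω} = {x ∈ K : ⟨x,ω⟩ ≥ μ} into K. -/

import Mathlib

open scoped RealInnerProductSpace

/-- The support function `H_K(ω) = sup {⟨x, ω⟩ : x ∈ K}`. -/
noncomputable def suppFn {N : ℕ} (K : Set (EuclideanSpace ℝ (Fin N)))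
    (ω : EuclideanSpace ℝ (Fin N)) : ℝ :=
  sSup ((fun x => ⟪x, ω⟫) '' K)

/-- The breadth `B_K(ω) = H_K(ω) + H_K(-ω)`. -/
noncomputable def breadthFn {N : ℕ} (K : Set (EuclideanSpace ℝ (Fin N)))
    (ω : EuclideanSpace ℝ (Fin N)) : ℝ :=
  suppFn K ω + suppFn K (-ω)

/-- The cap `K_{μ,ω} = {x ∈ K : ⟨x,ω⟩ ≥ μ}`. -/
noncomputable def capSet {N : ℕ} (K : Set (EuclideanSpace ℝ (Fin N)))
    (ω : EuclideanSpace ℝ (Fin N)) (μ : ℝ) : Set (EuclideanSpace ℝ (Fin N)) :=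
  {x ∈ K | μ ≤ ⟪x, ω⟫}

/-- The reflection `T_{μ,ω}(x) = x - 2ω(⟨ω,x⟩ - μ)`. -/
noncomputable def reflMap {N : ℕ} (ω : EuclideanSpace ℝ (Fin N)) (μ : ℝ)
    (x : EuclideanSpace ℝ (Fin N)) : EuclideanSpace ℝ (Fin N) :=
  x - (2 * (⟪ω, x⟫ - μ)) • ω

/-- The orthogonal projection onto the hyperplane `⟨x,ω⟩ = λ` (for `‖ω‖ = 1`). -/
noncomputable def projMap {N : ℕ} (ω : EuclideanSpace ℝ (Fin N)) (lam : ℝ)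
    (x : EuclideanSpace ℝ (Fin N)) : EuclideanSpace ℝ (Fin N) :=
  x - (⟪x, ω⟫ - lam) • ω

/-!
Both `T_{μ,ω} x` and the shadow point `x - (⟨x,ω⟩ - λ) ω` lie on the line through `x`
in direction `ω`. For `x` in the cap, `⟨x,ω⟩ ≤ H_K(ω) ≤ 2μ - λ`, so the reflection moves `x`
by at most `⟨x,ω⟩ - λ` and lands on the segment from `x` to its shadow point. That point lies
in `π_{λ,ω} ∩ K` by the shadow hypothesis, so `T_{μ,ω} x ∈ K` by convexity.
-/

section Folding

variable {N : ℕ}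

theorem inner_le_suppFn {K : Set (EuclideanSpace ℝ (Fin N))} (hK : IsCompact K)
    (ω : EuclideanSpace ℝ (Fin N)) {x : EuclideanSpace ℝ (Fin N)} (hx : x ∈ K) :
    ⟪x, ω⟫ ≤ suppFn K ω :=
  le_csSup ((hK.image (continuous_id.inner continuous_const)).bddAbove) ⟨x, hx, rfl⟩

theorem reflMap_mem_segment_projMap (ω : EuclideanSpace ℝ (Fin N)) {μ lam : ℝ}
    {x : EuclideanSpace ℝ (Fin N)} (hμ : μ ≤ ⟪x, ω⟫) (hlam : ⟪x, ω⟫ ≤ 2 * μ - lam) :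
    reflMap ω μ x ∈ segment ℝ x (projMap ω lam x) := by
  set s := ⟪x, ω⟫ with hs
  obtain ⟨t, ht0, ht1, hts⟩ : ∃ t : ℝ, 0 ≤ t ∧ t ≤ 1 ∧ t * (s - lam) = 2 * (s - μ) := by
    rcases (show lam ≤ s by linarith).eq_or_lt with hsl | hsl
    · exact ⟨0, le_rfl, zero_le_one, by rw [hsl]; linarith⟩
    · refine ⟨2 * (s - μ) / (s - lam), by positivity, ?_, ?_⟩
      · rw [div_le_one (by linarith)]; linarith
      · field_simp
  refine ⟨1 - t, t, by linarith, ht0, by ring, ?_⟩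
  rw [reflMap, projMap, real_inner_comm x ω, ← hs, ← hts]
  module

theorem folding_quarter_cap_general {N : ℕ}
    (K : Set (EuclideanSpace ℝ (Fin N))) (hK : IsCompact K) (hconv : Convex ℝ K)
    (ω : EuclideanSpace ℝ (Fin N)) (lam : ℝ)
    (hshadow : {x : EuclideanSpace ℝ (Fin N) | ⟪x, ω⟫ = lam} ∩ K = projMap ω lam '' K)
    (hlam : lam ≤ (suppFn K ω - suppFn K (-ω)) / 2) :
    lam + (1 / 4) * breadthFn K ω ≤ suppFn K ω - (1 / 4) * breadthFn K ω ∧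
      reflMap ω (suppFn K ω - (1 / 4) * breadthFn K ω) ''
          capSet K ω (suppFn K ω - (1 / 4) * breadthFn K ω) ⊆ K := by
  rw [breadthFn]
  refine ⟨by linarith, ?_⟩
  rintro _ ⟨x, ⟨hxK, hxμ⟩, rfl⟩
  have hxH : ⟪x, ω⟫ ≤ suppFn K ω := inner_le_suppFn hK ω hxK
  have hshadowK : projMap ω lam x ∈ K := (hshadow.superset (Set.mem_image_of_mem _ hxK)).2
  exact hconv.segment_subset hxK hshadowK
    (reflMap_mem_segment_projMap ω hxμ (by linarith))

/-- If `π_{λ,ω} ∩ K` is the shadow of `K` on `π_{λ,ω}` and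
`λ ≤ (H_K(ω) - H_K(-ω))/2`, then with `μ = H_K(ω) - B_K(ω)/4` one has
`μ ≥ λ + B_K(ω)/4` and `T_{μ,ω}` maps the cap `K_{μ,ω}` into `K`. -/
theorem folding_quarter_cap {N : ℕ}
    (K : Set (EuclideanSpace ℝ (Fin N))) (hK : IsCompact K) (hconv : Convex ℝ K)
    (ω : EuclideanSpace ℝ (Fin N)) (hω : ‖ω‖ = 1) (lam : ℝ)
    (hshadow : {x : EuclideanSpace ℝ (Fin N) | ⟪x, ω⟫ = lam} ∩ K = projMap ω lam '' K)
    (hlam : lam ≤ (suppFn K ω - suppFn K (-ω)) / 2) :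
    lam + (1 / 4) * breadthFn K ω ≤ suppFn K ω - (1 / 4) * breadthFn K ω ∧
      reflMap ω (suppFn K ω - (1 / 4) * breadthFn K ω) ''
          capSet K ω (suppFn K ω - (1 / 4) * breadthFn K ω) ⊆ K :=
  folding_quarter_cap_general K hK hconv ω lam hshadow hlam

end Folding
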